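/- arXiv:1705.00302 — 4 statements merged into one kernel-verified Lean document; each statement's English description precedes it below -/
import Mathlib

section
/- Let (X,μ) be a probability space, a < b real numbers, and f : X → ℝ measurable with a ≤ f ≤ b almost surely. Then the KL divergence of the Gibbs measure from μ satisfies D(μ_{|e^f} ‖ μ) ≤ (b-a)². -/
/-!
Writing `ν = μ.tilted f`, the log-likelihood ratio is `f - log ∫ exp f ∂μ`, so
`D(ν‖μ) = ν[f] - log ∫ exp f ∂μ`. Since `∫ exp (-f) ∂ν = (∫ exp f ∂μ)⁻¹`, this is the cumulant
generating function at `-1` of the centred variable `f - ν[f]` under `ν`. As `f ∈ [a, b]`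
`ν`-almost surely, Hoeffding's lemma bounds it by `(b - a)² / 8`.
-/

open MeasureTheory Real Classical

/-- Kullback–Leibler divergence `D(ν‖μ)` with values in `EReal`. -/
noncomputable def klDivE {X : Type*} [MeasurableSpace X] (ν μ : Measure X) : EReal :=
  if ν ≪ μ ∧ Integrable (fun x => Real.log ((ν.rnDeriv μ x).toReal)) ν then
    ((∫ x, Real.log ((ν.rnDeriv μ x).toReal) ∂ν : ℝ) : EReal)
  else ⊤

open ProbabilityTheory

section Tilted

variable {X : Type*} [MeasurableSpace X] {μ : Measure X} {f : X → ℝ}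

lemma klDivE_tilted_eq [SigmaFinite μ] [NeZero μ] (hexp : Integrable (fun x ↦ exp (f x)) μ)
    (hint : Integrable f (μ.tilted f)) :
    klDivE (μ.tilted f) μ = ((∫ x, f x ∂(μ.tilted f) - log (∫ x, exp (f x) ∂μ) : ℝ) : EReal) := by
  have := isProbabilityMeasure_tilted hexp
  have hac : μ.tilted f ≪ μ := tilted_absolutelyContinuous μ f
  have hlog := hac.ae_eq (log_rnDeriv_tilted_left_self hexp)
  have hint_log : Integrable (fun x ↦ log ((μ.tilted f).rnDeriv μ x).toReal) (μ.tilted f) :=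
    (hint.sub (integrable_const _)).congr hlog.symm
  rw [klDivE, if_pos ⟨hac, hint_log⟩, integral_congr_ae hlog,
    integral_sub hint (integrable_const _), integral_const, probReal_univ, one_smul]

lemma integral_exp_neg_tilted (μ : Measure X) (f : X → ℝ) :
    ∫ x, exp (-f x) ∂(μ.tilted f) = μ.real Set.univ / ∫ x, exp (f x) ∂μ := by
  simp_rw [integral_tilted, smul_eq_mul, div_mul_eq_mul_div, ← exp_add, add_neg_cancel, exp_zero]
  rw [integral_div, integral_const, smul_eq_mul, mul_one]

lemma cgf_sub_integral_tilted_neg_one [IsProbabilityMeasure μ]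
    (hexp : Integrable (fun x ↦ exp (f x)) μ) :
    cgf (fun x ↦ f x - (μ.tilted f)[f]) (μ.tilted f) (-1)
      = (μ.tilted f)[f] - log (∫ x, exp (f x) ∂μ) := by
  have hW : 0 < ∫ x, exp (f x) ∂μ := integral_exp_pos hexp
  simp_rw [cgf, mgf, neg_one_mul, neg_sub, sub_eq_add_neg, exp_add, integral_const_mul,
    integral_exp_neg_tilted, probReal_univ]
  rw [log_mul (exp_pos _).ne' (by positivity), log_exp, one_div, log_inv]

end Tilted

theorem klDiv_tilted_le_general {X : Type*} [MeasurableSpace X]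
    (μ : Measure X) [IsProbabilityMeasure μ] (a b : ℝ)
    (f : X → ℝ) (hf : Measurable f) (hbd : ∀ᵐ x ∂μ, f x ∈ Set.Icc a b) :
    klDivE (μ.tilted f) μ ≤ (((b - a) ^ 2 : ℝ) : EReal) := by
  have hexp : Integrable (fun x ↦ exp (f x)) μ := by
    simpa using integrable_exp_mul_of_mem_Icc (t := 1) hf.aemeasurable hbd
  have : IsProbabilityMeasure (μ.tilted f) := isProbabilityMeasure_tilted hexp
  have hbd_tilted : ∀ᵐ x ∂μ.tilted f, f x ∈ Set.Icc a b :=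
    (tilted_absolutelyContinuous μ f).ae_le hbd
  have hoeffding := (hasSubgaussianMGF_of_mem_Icc hf.aemeasurable hbd_tilted).cgf_le (-1)
  rw [klDivE_tilted_eq hexp (Integrable.of_mem_Icc a b hf.aemeasurable hbd_tilted),
    ← cgf_sub_integral_tilted_neg_one hexp, EReal.coe_le_coe_iff]
  refine hoeffding.trans ?_
  simp only [NNReal.coe_pow, NNReal.coe_div, coe_nnnorm, norm_eq_abs, NNReal.coe_ofNat, div_pow,
    sq_abs]
  linarith [sq_nonneg (b - a)]

/-- If `a ≤ f ≤ b` almost surely then the Gibbs measure `μ_{|e^f} = μ.tilted f`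
satisfies `D(μ_{|e^f} ‖ μ) ≤ (b-a)²`. -/
theorem klDiv_tilted_le {X : Type*} [MeasurableSpace X]
    (μ : Measure X) [IsProbabilityMeasure μ] (a b : ℝ) (hab : a < b)
    (f : X → ℝ) (hf : Measurable f) (hbd : ∀ᵐ x ∂μ, f x ∈ Set.Icc a b) :
    klDivE (μ.tilted f) μ ≤ (((b - a) ^ 2 : ℝ) : EReal) :=
  klDiv_tilted_le_general μ a b f hf hbd
end

section
/- For any finite mixture μ = p₁μ₁ + ⋯ + p_kμ_k of probability measures on Aⁿ, the total correlations satisfy Σ_j p_j TC(μ_j) ≤ TC(μ) + H(p₁,…,p_k). -/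
/-!
Write `μ = ∑ j, p j • μ j`. Marginals of a mixture are the mixtures of the marginals, so by
concavity of entropy each marginal entropy of `μ` dominates `∑ j, p j * H((μ j)ᵢ)`. In the other
direction, `H(μ) ≤ ∑ j, p j * H(μ j) + H(p)`: expanding `negMulLog (p j * μ j x)` turns the right
side into `∑ x, ∑ j, negMulLog (p j * μ j x)` (the entropy of the joint law of the component and
the point), and `negMulLog` is subadditive on `[0, ∞)`. Subtracting the two bounds gives the result.
-/

open Finset

def IsPMF {S : Type*} [Fintype S] (p : S → ℝ) : Prop :=
  (∀ s, 0 ≤ p s) ∧ ∑ s, p s = 1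

noncomputable def entropy {S : Type*} [Fintype S] (p : S → ℝ) : ℝ :=
  ∑ s, Real.negMulLog (p s)

noncomputable def marginal {A : Type*} [Fintype A] [DecidableEq A] {n : ℕ}
    (μ : (Fin n → A) → ℝ) (i : Fin n) : A → ℝ :=
  fun a => ∑ x : Fin n → A, if x i = a then μ x else 0

noncomputable def totalCorr {A : Type*} [Fintype A] [DecidableEq A] {n : ℕ}
    (μ : (Fin n → A) → ℝ) : ℝ :=
  (∑ i, entropy (marginal μ i)) - entropy μ

open Real

lemma negMulLog_sum_le_sum_negMulLog {ι : Type*} (s : Finset ι) (f : ι → ℝ)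
    (hf : ∀ i ∈ s, 0 ≤ f i) :
    negMulLog (∑ i ∈ s, f i) ≤ ∑ i ∈ s, negMulLog (f i) := by
  have hsum : negMulLog (∑ i ∈ s, f i) = ∑ i ∈ s, -f i * log (∑ i ∈ s, f i) := by
    rw [negMulLog, ← sum_mul, sum_neg_distrib]
  rw [hsum]
  refine sum_le_sum fun i hi => ?_
  rcases (hf i hi).eq_or_lt with h | h
  · simp [← h]
  · have hle : f i ≤ ∑ i ∈ s, f i := single_le_sum hf hi
    exact mul_le_mul_of_nonpos_left (log_le_log h hle) (neg_nonpos.2 (hf i hi))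

section Entropy

variable {S ι : Type*} [Fintype S] [Fintype ι]

lemma sum_mul_entropy_le_entropy_mixture (p : ι → ℝ) (q : ι → S → ℝ) (hp : IsPMF p)
    (hq : ∀ j s, 0 ≤ q j s) :
    ∑ j, p j * entropy (q j) ≤ entropy (fun s => ∑ j, p j * q j s) := by
  unfold entropy
  simp_rw [mul_sum]
  rw [sum_comm]
  refine sum_le_sum fun s _ => ?_
  simpa only [smul_eq_mul] using concaveOn_negMulLog.le_map_sum (t := univ) (w := p)
    (p := fun j => q j s) (fun j _ => hp.1 j) hp.2 (fun j _ => hq j s)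

lemma entropy_mixture_le (p : ι → ℝ) (q : ι → S → ℝ) (hp : ∀ j, 0 ≤ p j)
    (hq : ∀ j, IsPMF (q j)) :
    entropy (fun s => ∑ j, p j * q j s) ≤ ∑ j, p j * entropy (q j) + entropy p := by
  calc entropy (fun s => ∑ j, p j * q j s)
      ≤ ∑ s, ∑ j, negMulLog (p j * q j s) :=
        sum_le_sum fun s _ => negMulLog_sum_le_sum_negMulLog _ _
          fun j _ => mul_nonneg (hp j) ((hq j).1 s)
    _ = ∑ j, ((∑ s, q j s) * negMulLog (p j) + p j * entropy (q j)) := by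
        rw [sum_comm]
        simp_rw [negMulLog_mul, sum_add_distrib, ← sum_mul, entropy, mul_sum]
    _ = ∑ j, p j * entropy (q j) + entropy p := by
        simp_rw [(hq _).2, one_mul]
        rw [sum_add_distrib, add_comm, entropy]

end Entropy

section Marginal

variable {A : Type*} [Fintype A] [DecidableEq A] {n : ℕ}

lemma marginal_nonneg {μ : (Fin n → A) → ℝ} (hμ : ∀ x, 0 ≤ μ x) (i : Fin n) (a : A) :
    0 ≤ marginal μ i a :=
  sum_nonneg fun x _ => by split_ifs <;> simp [hμ x]

lemma marginal_mixture {ι : Type*} [Fintype ι] (p : ι → ℝ) (μs : ι → (Fin n → A) → ℝ)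
    (i : Fin n) :
    marginal (fun x => ∑ j, p j * μs j x) i = fun a => ∑ j, p j * marginal (μs j) i a := by
  funext a
  simp_rw [marginal, mul_sum, mul_ite, mul_zero]
  rw [sum_comm]
  exact sum_congr rfl fun x _ => by split_ifs <;> simp

end Marginal

/-- For a finite mixture `μ = ∑ j, p j • μ j` of probability measures on `Aⁿ`,
`∑ j p j * TC(μ j) ≤ TC(μ) + H(p)`. -/
theorem totalCorr_mixture {A : Type*} [Fintype A] [DecidableEq A] {n k : ℕ}
    (p : Fin k → ℝ) (μs : Fin k → (Fin n → A) → ℝ)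
    (hp : IsPMF p) (hμ : ∀ j, IsPMF (μs j)) :
    ∑ j, p j * totalCorr (μs j) ≤
      totalCorr (fun x => ∑ j, p j * μs j x) + entropy p := by
  have hmarginals : ∀ i, ∑ j, p j * entropy (marginal (μs j) i)
      ≤ entropy (marginal (fun x => ∑ j, p j * μs j x) i) := fun i => by
    rw [marginal_mixture]
    exact sum_mul_entropy_le_entropy_mixture p _ hp fun j => marginal_nonneg (hμ j).1 i
  have hjoint := entropy_mixture_le p μs hp.1 hμ
  have hsplit : ∑ j, p j * totalCorr (μs j)
      = ∑ i, ∑ j, p j * entropy (marginal (μs j) i) - ∑ j, p j * entropy (μs j) := by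
    simp_rw [totalCorr, mul_sub, sum_sub_distrib, mul_sum]
    rw [sum_comm]
  rw [hsplit, totalCorr]
  linarith [sum_le_sum fun i (_ : i ∈ univ) => hmarginals i]
end

section
/- For any probability measure μ on Aⁿ and any r > 0 there exists a subset S ⊆ {1,…,n} with |S| ≥ (1-r)n such that the dual total correlation of the projection μ_S satisfies DTC(μ_S) ≤ TC(μ)/r. -/
/-! With `I_S(i) = H(ξᵢ) + H(ξ_{S∖i}) - H(ξ_S)` one has `TC(S) = TC(S∖i) + I_S(i)` and
`∑_{i ∈ S} I_S(i) = TC(S) + DTC(S)`. Remove coordinates greedily: while `DTC(S) > TC/r`,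
some `i ∈ S` has `I_S(i) > TC/(r|S|) ≥ TC/(rn)`, so each removal lowers `TC(S)` by more than
`TC/(rn)`; as `TC ≥ 0`, fewer than `rn` removals happen. The argument needs only `H(∅) = 0` and
the subadditivity of joint entropy, so it works for any set function with these properties. -/

open Finset

/-- Pushforward of a mass function along a map. -/
noncomputable def push {Ω S : Type*} [Fintype Ω] [DecidableEq S]
    (p : Ω → ℝ) (f : Ω → S) : S → ℝ :=
  fun s => ∑ ω, if f ω = s then p ω else 0

/-- Shannon entropy of the random variable `f` under the mass function `p`. -/
noncomputable def entOf {Ω S : Type*} [Fintype Ω] [Fintype S] [DecidableEq S]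
    (p : Ω → ℝ) (f : Ω → S) : ℝ :=
  entropy (push p f)

/-- Conditional Shannon entropy `H(f | g)` under the mass function `p`. -/
noncomputable def condEnt {Ω S T : Type*} [Fintype Ω] [Fintype S] [Fintype T]
    [DecidableEq S] [DecidableEq T] (p : Ω → ℝ) (f : Ω → S) (g : Ω → T) : ℝ :=
  entOf p (fun ω => (f ω, g ω)) - entOf p g

/-- Dual total correlation `DTC(μ) = H(ξ) - ∑ i H(ξ i | ξ_{∖ i})` for a measure on `A^ι`. -/
noncomputable def dualTotalCorr {ι A : Type*} [Fintype ι] [DecidableEq ι]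
    [Fintype A] [DecidableEq A] (μ : (ι → A) → ℝ) : ℝ :=
  entOf μ id -
    ∑ i, condEnt μ (fun x => x i) (fun x => fun j : {j // j ≠ i} => x (j : ι))

namespace SetFunction

variable {ι : Type*} [DecidableEq ι] (H : Finset ι → ℝ)

/-! Read `H S` as the joint entropy of `(ξᵢ)_{i ∈ S}`; then the following are `TC(μ_S)`,
`DTC(μ_S)` and the mutual information `I(ξᵢ ; ξ_{S∖i})`. -/

def totalCorrelation (S : Finset ι) : ℝ :=
  ∑ i ∈ S, H {i} - H S

def dualTotalCorrelation (S : Finset ι) : ℝ :=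
  H S - ∑ i ∈ S, (H S - H (S.erase i))

def mutualInfo (S : Finset ι) (i : ι) : ℝ :=
  H {i} + H (S.erase i) - H S

def IsEntropyLike : Prop :=
  H ∅ = 0 ∧ ∀ i S, i ∉ S → H (insert i S) ≤ H {i} + H S

variable {H}

theorem totalCorrelation_eq_erase_add {S : Finset ι} {i : ι} (hi : i ∈ S) :
    totalCorrelation H S = totalCorrelation H (S.erase i) + mutualInfo H S i := by
  rw [totalCorrelation, totalCorrelation, mutualInfo, ← add_sum_erase _ _ hi]
  ring

theorem sum_mutualInfo (S : Finset ι) :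
    ∑ i ∈ S, mutualInfo H S i = totalCorrelation H S + dualTotalCorrelation H S := by
  simp only [mutualInfo, totalCorrelation, dualTotalCorrelation, sum_sub_distrib,
    sum_add_distrib, sum_const, nsmul_eq_mul]
  ring

theorem IsEntropyLike.totalCorrelation_nonneg (hH : IsEntropyLike H) (S : Finset ι) :
    0 ≤ totalCorrelation H S := by
  induction S using Finset.induction_on with
  | empty => simp [totalCorrelation, hH.1]
  | insert i S hi ih =>
    rw [totalCorrelation] at ih ⊢
    rw [sum_insert hi]
    linarith [hH.2 i S hi]

theorem IsEntropyLike.exists_subset_dualTotalCorrelation_le (hH : IsEntropyLike H) {c D : ℝ}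
    (hc : 0 ≤ c) (S : Finset ι) (hcD : c * S.card ≤ D) :
    ∃ S' ⊆ S, dualTotalCorrelation H S' ≤ D ∧
      (S' = S ∨ (S.card - S'.card) * c < totalCorrelation H S) := by
  induction S using Finset.strongInduction with
  | H S ih =>
  by_cases hS : dualTotalCorrelation H S ≤ D
  · exact ⟨S, subset_rfl, hS, Or.inl rfl⟩
  push Not at hS
  obtain ⟨i, hiS, hi⟩ : ∃ i ∈ S, c < mutualInfo H S i := by
    apply exists_lt_of_sum_lt
    rw [sum_const, nsmul_eq_mul, sum_mutualInfo]
    linarith [hH.totalCorrelation_nonneg S]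
  have hcard : ((S.erase i).card : ℝ) = S.card - 1 := by
    rw [card_erase_of_mem hiS, Nat.cast_pred (card_pos.2 ⟨i, hiS⟩)]
  obtain ⟨S', hS'S, hS'D, hS'⟩ := ih (S.erase i) (erase_ssubset hiS)
    (by nlinarith)
  refine ⟨S', hS'S.trans (erase_subset i S), hS'D, Or.inr ?_⟩
  rw [totalCorrelation_eq_erase_add hiS]
  rcases hS' with rfl | hlt
  · rw [hcard]
    linarith [hH.totalCorrelation_nonneg (S.erase i)]
  · rw [hcard] at hlt
    linarith

theorem IsEntropyLike.exists_subset_card_ge_dualTotalCorrelation_le [Fintype ι]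
    (hH : IsEntropyLike H) {r : ℝ} (hr : 0 < r) :
    ∃ S : Finset ι, (1 - r) * Fintype.card ι ≤ S.card ∧
      dualTotalCorrelation H S ≤ totalCorrelation H univ / r := by
  set T := totalCorrelation H univ
  set n : ℝ := (Fintype.card ι : ℝ)
  have hT : 0 ≤ T := hH.totalCorrelation_nonneg _
  have hcn : T / (r * n) * n ≤ T / r := by
    rcases eq_or_ne n 0 with hn | hn
    · rw [hn, mul_zero]; positivity
    · exact le_of_eq (by field_simp)
  obtain ⟨S, -, hSD, hS⟩ :=
    hH.exists_subset_dualTotalCorrelation_le (c := T / (r * n)) (D := T / r) (by positivity)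
      univ (by rwa [card_univ])
  refine ⟨S, ?_, hSD⟩
  rw [card_univ] at hS
  rcases hS with rfl | hlt
  · simp only [card_univ]
    nlinarith [(Nat.cast_nonneg _ : (0 : ℝ) ≤ n)]
  by_contra! hfew
  have hn : 0 < n := by nlinarith [(Nat.cast_nonneg _ : (0 : ℝ) ≤ S.card)]
  have : r * n * (T / (r * n)) ≤ (n - S.card) * (T / (r * n)) := by
    gcongr; linarith
  rw [mul_div_cancel₀ _ (by positivity)] at this
  linarith

end SetFunction

section Entropy

variable {Ω S T : Type*} [Fintype Ω] [Fintype S] [Fintype T] [DecidableEq S] [DecidableEq T]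

theorem sum_push (p : Ω → ℝ) (f : Ω → S) : ∑ s, push p f s = ∑ ω, p ω := by
  simp only [push]
  rw [sum_comm]
  simp

theorem isPMF_push {p : Ω → ℝ} (hp : IsPMF p) (f : Ω → S) : IsPMF (push p f) :=
  ⟨fun s => sum_nonneg fun ω _ => by split <;> simp [hp.1 ω], by rw [sum_push, hp.2]⟩

omit [Fintype T] in
theorem push_push (p : Ω → ℝ) (f : Ω → S) (g : S → T) :
    push (push p f) g = push p (fun ω => g (f ω)) := by
  funext t
  simp only [push, ← sum_filter]
  rw [sum_comm' (t' := univ.filter fun ω => g (f ω) = t)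
    (s' := fun ω => {f ω})]
  · simp
  · simp only [mem_filter, mem_univ, true_and, mem_singleton]
    grind

omit [DecidableEq T] in
theorem push_id [DecidableEq Ω] (p : Ω → ℝ) : push p id = p :=
  funext fun ω => by simp [push]

omit [DecidableEq T] in
theorem push_fst_apply (P : S × T → ℝ) (s : S) : push P Prod.fst s = ∑ t, P (s, t) := by
  simp [push, Fintype.sum_prod_type_right]

omit [DecidableEq S] in
theorem push_snd_apply (P : S × T → ℝ) (t : T) : push P Prod.snd t = ∑ s, P (s, t) := by
  simp [push, Fintype.sum_prod_type]

theorem entOf_push (p : Ω → ℝ) (f : Ω → S) (g : S → T) :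
    entOf (push p f) g = entOf p (fun ω => g (f ω)) := by
  rw [entOf, push_push, entOf]

theorem entOf_comp_of_injective (p : Ω → ℝ) {g : S → T} (hg : Function.Injective g)
    (f : Ω → S) : entOf p (fun ω => g (f ω)) = entOf p f := by
  refine (Fintype.sum_of_injective g hg _ _ (fun t ht => ?_) fun s => ?_).symm
  · have : push p (fun ω => g (f ω)) t = 0 :=
      sum_eq_zero fun ω _ => if_neg fun h => ht ⟨f ω, h⟩
    rw [this, Real.negMulLog_zero]
  · simp only [push, hg.eq_iff]

theorem entOf_of_injective [DecidableEq Ω] (p : Ω → ℝ) {g : Ω → S}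
    (hg : Function.Injective g) : entOf p g = entOf p id :=
  entOf_comp_of_injective p hg id

/-- Gibbs' inequality `a log (bc / a) ≤ bc - a`, split so that it also holds at `a = 0`. -/
theorem Real.negMulLog_le_of_le_of_le {a b c : ℝ} (ha : 0 ≤ a) (hab : a ≤ b) (hac : a ≤ c) :
    Real.negMulLog a ≤ -(a * Real.log b) - a * Real.log c + (b * c - a) := by
  rcases ha.eq_or_lt with rfl | ha
  · simpa using mul_nonneg hab hac
  have hb := ha.trans_le hab
  have hc := ha.trans_le hac
  have key := Real.log_le_sub_one_of_pos (show 0 < b * c / a by positivity)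
  rw [Real.log_div (by positivity) ha.ne', Real.log_mul hb.ne' hc.ne'] at key
  have := mul_le_mul_of_nonneg_left key ha.le
  rw [show a * (b * c / a - 1) = b * c - a by field_simp] at this
  rw [Real.negMulLog]
  linarith

theorem entropy_le_entOf_fst_add_entOf_snd {P : S × T → ℝ} (hP : IsPMF P) :
    entropy P ≤ entOf P Prod.fst + entOf P Prod.snd := by
  set Q := push P Prod.fst
  set R := push P Prod.snd
  have hQ : ∀ s, Q s = ∑ t, P (s, t) := push_fst_apply P
  have hR : ∀ t, R t = ∑ s, P (s, t) := push_snd_apply P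
  have hPQ : ∀ s t, P (s, t) ≤ Q s := fun s t => by
    rw [hQ]; exact single_le_sum (fun t _ => hP.1 (s, t)) (mem_univ t)
  have hPR : ∀ s t, P (s, t) ≤ R t := fun s t => by
    rw [hR]; exact single_le_sum (fun s _ => hP.1 (s, t)) (mem_univ s)
  have hQ1 : ∑ s, Q s = 1 := (isPMF_push hP _).2
  have hR1 : ∑ t, R t = 1 := (isPMF_push hP _).2
  have hlogQ : ∑ x : S × T, -(P x * Real.log (Q x.1)) = entOf P Prod.fst := by
    change _ = ∑ s, Real.negMulLog (Q s)
    simp only [Fintype.sum_prod_type, Real.negMulLog, hQ,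
      ← sum_mul, sum_neg_distrib, neg_mul]
  have hlogR : ∑ x : S × T, P x * Real.log (R x.2) = -entOf P Prod.snd := by
    change _ = -∑ t, Real.negMulLog (R t)
    simp only [Fintype.sum_prod_type_right, Real.negMulLog, hR,
      ← sum_mul, sum_neg_distrib, neg_mul, neg_neg]
  have hQR : ∑ x : S × T, Q x.1 * R x.2 = 1 := by
    rw [Fintype.sum_prod_type, ← Fintype.sum_mul_sum, hQ1, hR1, one_mul]
  calc entropy P
      ≤ ∑ x : S × T, (-(P x * Real.log (Q x.1)) - P x * Real.log (R x.2)
          + (Q x.1 * R x.2 - P x)) :=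
        sum_le_sum fun x _ =>
          Real.negMulLog_le_of_le_of_le (hP.1 x) (hPQ x.1 x.2) (hPR x.1 x.2)
    _ = entOf P Prod.fst + entOf P Prod.snd := by
        rw [sum_add_distrib, sum_sub_distrib, sum_sub_distrib, hlogQ, hlogR,
          hQR, hP.2]
        ring

theorem entOf_pair_le {p : Ω → ℝ} (hp : IsPMF p) (f : Ω → S) (g : Ω → T) :
    entOf p (fun ω => (f ω, g ω)) ≤ entOf p f + entOf p g :=
  calc entOf p (fun ω => (f ω, g ω))
      ≤ entOf (push p fun ω => (f ω, g ω)) Prod.fst +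
          entOf (push p fun ω => (f ω, g ω)) Prod.snd :=
        entropy_le_entOf_fst_add_entOf_snd (isPMF_push hp _)
    _ = entOf p f + entOf p g := by rw [entOf_push, entOf_push]

end Entropy

section JointEntropy

variable {ι A : Type*} [Fintype ι] [DecidableEq ι] [Fintype A] [DecidableEq A]

noncomputable def jointEntropy (μ : (ι → A) → ℝ) (S : Finset ι) : ℝ :=
  entOf μ (fun x (j : {j // j ∈ S}) => x j)

theorem jointEntropy_empty {μ : (ι → A) → ℝ} (hμ : ∑ x, μ x = 1) :
    jointEntropy μ ∅ = 0 := by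
  have : ∀ y, push μ (fun x (j : {j // j ∈ (∅ : Finset ι)}) => x j) y = 1 := fun y => by
    simp only [push, Subsingleton.elim _ y, if_true, hμ]
  simp [jointEntropy, entOf, entropy, this]

theorem jointEntropy_singleton (μ : (ι → A) → ℝ) (i : ι) :
    jointEntropy μ {i} = entOf μ (fun x => x i) := by
  have hconst : Function.Injective fun a (_ : {j // j ∈ ({i} : Finset ι)}) => (a : A) :=
    fun _ _ h => congrFun h ⟨i, mem_singleton_self i⟩
  rw [jointEntropy, ← entOf_comp_of_injective μ hconst]
  congr! with x ⟨j, hj⟩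
  exact mem_singleton.1 hj

theorem jointEntropy_insert_le {μ : (ι → A) → ℝ} (hμ : IsPMF μ) (i : ι) (S : Finset ι) :
    jointEntropy μ (insert i S) ≤ jointEntropy μ {i} + jointEntropy μ S := by
  have hsplit : Function.Injective fun (y : {j // j ∈ insert i S} → A) =>
      (y ⟨i, mem_insert_self i S⟩,
        fun j : {j // j ∈ S} => y ⟨j, mem_insert_of_mem j.2⟩) := by
    intro y z h
    simp only [Prod.mk.injEq, funext_iff] at h
    funext ⟨j, hj⟩
    rcases mem_insert.1 hj with rfl | hjS
    · exact h.1
    · exact h.2 ⟨j, hjS⟩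
  rw [jointEntropy_singleton, jointEntropy, ← entOf_comp_of_injective μ hsplit]
  exact entOf_pair_le hμ _ _

theorem isEntropyLike_jointEntropy {μ : (ι → A) → ℝ} (hμ : IsPMF μ) :
    SetFunction.IsEntropyLike (jointEntropy μ) :=
  ⟨jointEntropy_empty hμ.2, fun i S _ => jointEntropy_insert_le hμ i S⟩

theorem jointEntropy_univ (μ : (ι → A) → ℝ) : jointEntropy μ univ = entropy μ := by
  have hrestrict : Function.Injective fun (x : ι → A) (j : {j // j ∈ univ}) => x j :=
    fun _ _ h => funext fun j => congrFun h (⟨j, mem_univ j⟩ : {j // j ∈ univ})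
  rw [jointEntropy, entOf_of_injective μ hrestrict, entOf, push_id]

theorem dualTotalCorr_push_restrict (μ : (ι → A) → ℝ) (S : Finset ι) :
    dualTotalCorr (push μ fun x (j : {j // j ∈ S}) => x j) =
      SetFunction.dualTotalCorrelation (jointEntropy μ) S := by
  set ν := push μ fun x (j : {j // j ∈ S}) => x j
  have hid : entOf ν id = jointEntropy μ S := entOf_push _ _ _
  have hpair (i : {j // j ∈ S}) :
      entOf ν (fun y => (y i, fun j : {j // j ≠ i} => y j)) = jointEntropy μ S := by
    refine (entOf_of_injective ν fun y z h => ?_).trans hid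
    simp only [Prod.mk.injEq, funext_iff] at h
    funext j
    by_cases hj : j = i
    · exact hj ▸ h.1
    · exact h.2 ⟨j, hj⟩
  have hrest (i : {j // j ∈ S}) :
      entOf ν (fun y => fun j : {j // j ≠ i} => y j) = jointEntropy μ (S.erase i) := by
    have hrelabel : Function.Injective fun (y : {j : {j // j ∈ S} // j ≠ i} → A)
        (j : {j // j ∈ S.erase i}) =>
        y ⟨⟨j, mem_of_mem_erase j.2⟩,
          fun h => ne_of_mem_erase j.2 (congrArg Subtype.val h)⟩ := by
      intro y z h
      funext ⟨⟨j, hjS⟩, hji⟩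
      exact congrFun h ⟨j, mem_erase.2 ⟨fun h => hji (Subtype.ext h), hjS⟩⟩
    rw [entOf_push, jointEntropy, ← entOf_comp_of_injective μ hrelabel]
  simp only [dualTotalCorr, condEnt, hid, hpair, hrest, SetFunction.dualTotalCorrelation]
  rw [← sum_coe_sort S]

end JointEntropy

theorem totalCorr_eq_totalCorrelation_jointEntropy {A : Type*} [Fintype A] [DecidableEq A]
    {n : ℕ} (μ : (Fin n → A) → ℝ) :
    totalCorr μ = SetFunction.totalCorrelation (jointEntropy μ) univ := by
  simp only [totalCorr, SetFunction.totalCorrelation, jointEntropy_univ, jointEntropy_singleton]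
  rfl

/-- For any `μ ∈ Pr(Aⁿ)` and `r > 0` there is `S ⊆ [n]` with `|S| ≥ (1-r)n` and
`DTC(μ_S) ≤ TC(μ)/r`. -/
theorem exists_subset_dtc_le {A : Type*} [Fintype A] [DecidableEq A] {n : ℕ}
    (μ : (Fin n → A) → ℝ) (hμ : IsPMF μ) (r : ℝ) (hr : 0 < r) :
    ∃ S : Finset (Fin n), (1 - r) * n ≤ (S.card : ℝ) ∧
      dualTotalCorr (push μ (fun x => fun j : {j // j ∈ S} => x (j : Fin n))) ≤
        totalCorr μ / r := by
  obtain ⟨S, hcard, hS⟩ :=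
    (isEntropyLike_jointEntropy hμ).exists_subset_card_ge_dualTotalCorrelation_le hr
  refine ⟨S, by simpa using hcard, ?_⟩
  rwa [dualTotalCorr_push_restrict, totalCorr_eq_totalCorrelation_jointEntropy]
end

section
/- Let ν be a probability measure on a finite set A and μ a probability measure on Aⁿ, and let δ = d̄_n(μ, ν^{×n}) be the transportation distance in the normalized Hamming metric. Then TC(μ) ≤ 2(H(δ,1-δ) + δ log|A|)·n. -/
open Finset

/-- The normalized Hamming metric on `Aⁿ`. -/
noncomputable def hammingN {A : Type*} [DecidableEq A] {n : ℕ} (x y : Fin n → A) : ℝ :=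
  ((Finset.univ.filter fun i => x i ≠ y i).card : ℝ) / n

/-- Transportation (Kantorovich) distance between mass functions on a finite set,
for the cost `d`: the infimum of `∑ γ(x,y) d(x,y)` over couplings `γ`. -/
noncomputable def ftdist {K : Type*} [Fintype K] (d : K → K → ℝ) (μ ν : K → ℝ) : ℝ :=
  sInf {c | ∃ γ : K × K → ℝ, (∀ p, 0 ≤ γ p) ∧
    (∀ x, ∑ y, γ (x, y) = μ x) ∧ (∀ y, ∑ x, γ (x, y) = ν y) ∧
    c = ∑ p : K × K, γ p * d p.1 p.2}

/-!
Fix a coupling `γ` of `X ~ μ` and `Y ~ ν^{×n}`, let `εᵢ = P(Xᵢ ≠ Yᵢ)`, so that the expected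
normalized Hamming distance is the average of the `εᵢ`, and let `φ(t) = H(t, 1-t) + t log |A|`.
Fano's inequality on the pair `(Xᵢ, Yᵢ)` gives both `H(Xᵢ) ≤ H(Yᵢ) + φ(εᵢ) = H(ν) + φ(εᵢ)` and
`H(Yᵢ | Xᵢ) ≤ φ(εᵢ)`. By subadditivity of conditional entropy,
`n H(ν) = H(Y) ≤ H(X, Y) ≤ H(X) + ∑ᵢ H(Yᵢ | Xᵢ)`. Adding the two estimates,
`TC(μ) ≤ 2 ∑ᵢ φ(εᵢ) ≤ 2 n φ(avg εᵢ)` by concavity of `φ`. The bound is a closed condition on the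
cost of the coupling, so it passes to the infimum `δ`.
-/

open Real

lemma negMulLog_sum_le {ι : Type*} (s : Finset ι) {f : ι → ℝ} (hf : ∀ i ∈ s, 0 ≤ f i) :
    negMulLog (∑ i ∈ s, f i) ≤ ∑ i ∈ s, negMulLog (f i) := by
  rw [negMulLog, neg_mul, sum_mul, ← sum_neg_distrib]
  refine sum_le_sum fun i hi => ?_
  rcases (hf i hi).eq_or_lt with h | h
  · simp [← h]
  · have : log (f i) ≤ log (∑ j ∈ s, f j) := log_le_log h (single_le_sum hf hi)
    rw [negMulLog]
    nlinarith

lemma negMulLog_prod {ι : Type*} [DecidableEq ι] (s : Finset ι) (f : ι → ℝ) :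
    negMulLog (∏ i ∈ s, f i) = ∑ j ∈ s, negMulLog (f j) * ∏ i ∈ s.erase j, f i := by
  induction s using Finset.induction with
  | empty => simp
  | insert a s ha ih =>
    rw [prod_insert ha, negMulLog_mul, ih, sum_insert ha, erase_insert ha, mul_sum]
    congr 1
    · ring
    refine sum_congr rfl fun j hj => ?_
    rw [erase_insert_of_ne (by rintro rfl; exact ha hj),
      prod_insert fun h => ha (erase_subset _ _ h)]
    ring

section Entropy

variable {S : Type*} [Fintype S]

lemma entropy_eq_neg_sum_mul_log (p : S → ℝ) : entropy p = -∑ s, p s * log (p s) := by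
  simp [entropy, negMulLog, sum_neg_distrib]

/-- Gibbs' inequality, against a sub-probability `q`. -/
lemma entropy_le_neg_sum_mul_log {p q : S → ℝ} (hp : IsPMF p) (hq : ∀ s, 0 ≤ q s)
    (hq1 : ∑ s, q s ≤ 1) (hpq : ∀ s, p s ≠ 0 → 0 < q s) :
    entropy p ≤ -∑ s, p s * log (q s) := by
  have key : ∀ s ∈ univ, p s * log (q s) - p s * log (p s) ≤ q s - p s := by
    intro s _
    rcases (hp.1 s).eq_or_lt with h | h
    · simp [← h, hq s]
    · have hqs := hpq s h.ne'
      rw [← mul_sub, ← log_div hqs.ne' h.ne']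
      calc p s * log (q s / p s) ≤ p s * (q s / p s - 1) :=
            mul_le_mul_of_nonneg_left (log_le_sub_one_of_pos (div_pos hqs h)) h.le
        _ = q s - p s := by field_simp
  have := sum_le_sum key
  rw [sum_sub_distrib, sum_sub_distrib, hp.2] at this
  rw [entropy_eq_neg_sum_mul_log]
  linarith

end Entropy

section Marginals

variable {ι κ : Type*} [Fintype ι] [Fintype κ]

lemma entropy_fst_le {m : ι × κ → ℝ} (hm : ∀ p, 0 ≤ m p) :
    entropy (fun a => ∑ b, m (a, b)) ≤ entropy m := by
  rw [entropy, entropy, Fintype.sum_prod_type]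
  exact sum_le_sum fun a _ => negMulLog_sum_le _ fun b _ => hm (a, b)

lemma entropy_snd_le {m : ι × κ → ℝ} (hm : ∀ p, 0 ≤ m p) :
    entropy (fun b => ∑ a, m (a, b)) ≤ entropy m := by
  rw [entropy, entropy, Fintype.sum_prod_type_right]
  exact sum_le_sum fun b _ => negMulLog_sum_le _ fun a _ => hm (a, b)

lemma sum_mul_log_fst (m : ι × κ → ℝ) :
    ∑ p, m p * log (∑ b, m (p.1, b)) = -entropy (fun a => ∑ b, m (a, b)) := by
  rw [entropy_eq_neg_sum_mul_log, neg_neg, Fintype.sum_prod_type]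
  simp only [← sum_mul]

lemma sum_mul_log_snd (m : ι × κ → ℝ) :
    ∑ p, m p * log (∑ a, m (a, p.2)) = -entropy (fun b => ∑ a, m (a, b)) := by
  rw [entropy_eq_neg_sum_mul_log, neg_neg, Fintype.sum_prod_type_right]
  simp only [← sum_mul]

lemma sum_mul_log_div_fst {m : ι × κ → ℝ} (hm : ∀ p, 0 ≤ m p) :
    ∑ p, m p * log (m p / ∑ b, m (p.1, b)) = -(entropy m - entropy (fun a => ∑ b, m (a, b))) := by
  have hsplit : ∀ p, m p * log (m p / ∑ b, m (p.1, b))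
      = m p * log (m p) - m p * log (∑ b, m (p.1, b)) := by
    intro p
    rcases (hm p).eq_or_lt with h | h
    · simp [← h]
    · have hle : m p ≤ ∑ b, m (p.1, b) :=
        single_le_sum (f := fun b => m (p.1, b)) (fun b _ => hm _) (mem_univ p.2)
      rw [log_div h.ne' (h.trans_le hle).ne', mul_sub]
  rw [sum_congr rfl fun p _ => hsplit p, sum_sub_distrib, sum_mul_log_fst,
    entropy_eq_neg_sum_mul_log m]
  ring

end Marginals

section Product

variable {ι A : Type*} [Fintype ι] [DecidableEq ι] [Fintype A] {ν : A → ℝ}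

lemma IsPMF.pi (hν : IsPMF ν) : IsPMF (fun x : ι → A => ∏ i, ν (x i)) :=
  ⟨fun x => prod_nonneg fun i _ => hν.1 _, by rw [← Fintype.prod_sum]; simp [hν.2]⟩

lemma sum_mul_prod_erase_pi (hν : ∑ a, ν a = 1) (j : ι) (g : A → ℝ) :
    ∑ x : ι → A, g (x j) * ∏ k ∈ univ.erase j, ν (x k) = ∑ a, g a := by
  have h : ∀ x : ι → A,
      g (x j) * ∏ k ∈ univ.erase j, ν (x k) = ∏ k, (if k = j then g else ν) (x k) := by
    intro x
    rw [← mul_prod_erase univ _ (mem_univ j), if_pos rfl]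
    exact congrArg _ (prod_congr rfl fun k hk => by rw [if_neg (ne_of_mem_erase hk)])
  simp_rw [h]
  rw [← Fintype.prod_sum, prod_eq_single j (fun k _ hk => by simp [hk, hν]) (by simp)]
  simp

lemma entropy_pi (hν : IsPMF ν) :
    entropy (fun x : ι → A => ∏ i, ν (x i)) = Fintype.card ι * entropy ν := by
  simp_rw [entropy, negMulLog_prod]
  rw [sum_comm]
  simp [sum_mul_prod_erase_pi hν.2 _ (fun a => negMulLog (ν a))]

lemma marginal_pi [DecidableEq A] {n : ℕ} (hν : IsPMF ν) (i : Fin n) :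
    marginal (fun x : Fin n → A => ∏ j, ν (x j)) i = ν := by
  funext a
  have h : ∀ x : Fin n → A, (if x i = a then ∏ j, ν (x j) else 0)
      = (if x i = a then ν (x i) else 0) * ∏ k ∈ univ.erase i, ν (x k) := by
    intro x
    rw [← mul_prod_erase univ _ (mem_univ i)]
    split_ifs <;> simp
  simp only [marginal, h]
  rw [sum_mul_prod_erase_pi hν.2 i (fun b => if b = a then ν b else 0)]
  simp

end Product

noncomputable def fanoBound (A : Type*) [Fintype A] (t : ℝ) : ℝ :=
  binEntropy t + t * log (Fintype.card A)

lemma concaveOn_fanoBound (A : Type*) [Fintype A] : ConcaveOn ℝ (Set.Icc 0 1) (fanoBound A) :=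
  strictConcave_binEntropy.concaveOn.add
    ⟨convex_Icc 0 1, fun _ _ _ _ _ _ _ _ _ => le_of_eq (by simp only [smul_eq_mul]; ring)⟩

section Fano

variable {A : Type*} [Fintype A] [DecidableEq A] {m : A × A → ℝ}

def probNe (m : A × A → ℝ) : ℝ := ∑ q : A × A, if q.1 ≠ q.2 then m q else 0

lemma probNe_nonneg (hm : ∀ p, 0 ≤ m p) : 0 ≤ probNe m :=
  sum_nonneg fun p _ => by split_ifs <;> simp [hm p]

lemma sum_diag_eq_one_sub_probNe (hm : IsPMF m) :
    ∑ q : A × A, (if q.1 = q.2 then m q else 0) = 1 - probNe m := by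
  rw [probNe, ← hm.2, eq_sub_iff_add_eq, ← sum_add_distrib]
  exact sum_congr rfl fun p _ => by by_cases h : p.1 = p.2 <;> simp [h]

lemma probNe_le_one (hm : IsPMF m) : probNe m ≤ 1 := by
  have := sum_diag_eq_one_sub_probNe hm
  have : 0 ≤ ∑ q : A × A, (if q.1 = q.2 then m q else 0) :=
    sum_nonneg fun p _ => by split_ifs <;> simp [hm.1 p]
  linarith

/-- For each `b`, a sub-probability in `a` that guesses `a = b` with probability `1 - ε`. -/
noncomputable def fanoWeight (ε : ℝ) (p : A × A) : ℝ :=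
  if p.1 = p.2 then 1 - ε else ε / Fintype.card A

lemma fanoWeight_nonneg {ε : ℝ} (h0 : 0 ≤ ε) (h1 : ε ≤ 1) (p : A × A) : 0 ≤ fanoWeight ε p := by
  unfold fanoWeight
  split_ifs
  · linarith
  · positivity

lemma sum_fanoWeight_le_one {ε : ℝ} (hε : 0 ≤ ε) (b : A) : ∑ a, fanoWeight ε (a, b) ≤ 1 := by
  have hA : (1 : ℝ) ≤ Fintype.card A := by exact_mod_cast Fintype.card_pos_iff.2 ⟨b⟩
  have h : ∀ a, fanoWeight ε (a, b) = (if a = b then 1 - ε - ε / Fintype.card A else 0)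
      + ε / Fintype.card A := fun a => by unfold fanoWeight; split_ifs <;> ring
  simp only [h, sum_add_distrib, sum_ite_eq', mem_univ, if_true, sum_const, card_univ,
    nsmul_eq_mul]
  rw [mul_div_cancel₀ _ (by positivity)]
  linarith [div_nonneg hε (zero_le_one.trans hA)]

lemma fanoWeight_probNe_pos (hm : IsPMF m) {p : A × A} (hp : m p ≠ 0) :
    0 < fanoWeight (probNe m) p := by
  have hpos : 0 < m p := (hm.1 p).lt_of_ne' hp
  unfold fanoWeight
  split_ifs with h
  · have := single_le_sum (f := fun q : A × A => if q.1 = q.2 then m q else 0)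
      (fun q _ => by split_ifs <;> simp [hm.1 q]) (mem_univ p)
    simp only [h, if_true, sum_diag_eq_one_sub_probNe hm] at this
    linarith
  · have := single_le_sum (f := fun q : A × A => if q.1 ≠ q.2 then m q else 0)
      (fun q _ => by split_ifs <;> simp [hm.1 q]) (mem_univ p)
    simp only [ne_eq, h, not_false_eq_true, if_true] at this
    have hA : (0 : ℝ) < Fintype.card A := by exact_mod_cast Fintype.card_pos_iff.2 ⟨p.1⟩
    exact div_pos (hpos.trans_le this) hA

lemma sum_mul_log_fanoWeight (hm : IsPMF m) :
    ∑ p, m p * log (fanoWeight (probNe m) p) = -fanoBound A (probNe m) := by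
  have h : ∀ p : A × A, m p * log (fanoWeight (probNe m) p)
      = (if p.1 = p.2 then m p else 0) * log (1 - probNe m)
        + (if p.1 ≠ p.2 then m p else 0) * log (probNe m / Fintype.card A) := fun p => by
    unfold fanoWeight; by_cases h : p.1 = p.2 <;> simp [h]
  rw [sum_congr rfl fun p _ => h p, sum_add_distrib, ← sum_mul, ← sum_mul,
    sum_diag_eq_one_sub_probNe hm, ← probNe, fanoBound,
    binEntropy_eq_negMulLog_add_negMulLog_one_sub, negMulLog, negMulLog]
  rcases eq_or_ne (probNe m) 0 with h0 | h0
  · simp [h0]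
  obtain ⟨p, -, -⟩ := exists_ne_zero_of_sum_ne_zero (hm.2.trans_ne one_ne_zero)
  rw [log_div h0 (Nat.cast_ne_zero.2 (Fintype.card_pos_iff.2 ⟨p.1⟩).ne')]
  ring

/-- Fano's inequality. -/
theorem entropy_le_entropy_snd_add_fanoBound (hm : IsPMF m) :
    entropy m ≤ entropy (fun b => ∑ a, m (a, b)) + fanoBound A (probNe m) := by
  set q : A → ℝ := fun b => ∑ a, m (a, b)
  have hq : ∀ p, m p ≤ q p.2 := fun p =>
    single_le_sum (f := fun a => m (a, p.2)) (fun a _ => hm.1 _) (mem_univ p.1)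
  have hε0 := probNe_nonneg hm.1
  have hε1 := probNe_le_one hm
  have hqpos : ∀ p, m p ≠ 0 → 0 < q p.2 := fun p hp => ((hm.1 p).lt_of_ne' hp).trans_le (hq p)
  have hsupp : ∀ p, m p ≠ 0 → 0 < q p.2 * fanoWeight (probNe m) p := fun p hp =>
    mul_pos (hqpos p hp) (fanoWeight_probNe_pos hm hp)
  have hsum : ∑ p : A × A, q p.2 * fanoWeight (probNe m) p ≤ 1 := by
    rw [Fintype.sum_prod_type_right]
    calc ∑ b, ∑ a, q b * fanoWeight (probNe m) (a, b)
        _ = ∑ b, q b * ∑ a, fanoWeight (probNe m) (a, b) := by simp only [mul_sum]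
        _ ≤ ∑ b, q b := sum_le_sum fun b _ =>
          mul_le_of_le_one_right (sum_nonneg fun a _ => hm.1 _) (sum_fanoWeight_le_one hε0 b)
        _ = 1 := by rw [← hm.2, Fintype.sum_prod_type_right]
  have hgibbs := entropy_le_neg_sum_mul_log hm
    (fun p => mul_nonneg (sum_nonneg fun a _ => hm.1 _) (fanoWeight_nonneg hε0 hε1 p)) hsum hsupp
  have hsplit : ∀ p, m p * log (q p.2 * fanoWeight (probNe m) p)
      = m p * log (q p.2) + m p * log (fanoWeight (probNe m) p) := fun p => by
    rcases eq_or_ne (m p) 0 with hp | hp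
    · simp [hp]
    · rw [log_mul (hqpos p hp).ne' (fanoWeight_probNe_pos hm hp).ne', mul_add]
  rw [sum_congr rfl fun p _ => hsplit p, sum_add_distrib, sum_mul_log_snd,
    sum_mul_log_fanoWeight hm] at hgibbs
  linarith

theorem entropy_le_entropy_fst_add_fanoBound (hm : IsPMF m) :
    entropy m ≤ entropy (fun a => ∑ b, m (a, b)) + fanoBound A (probNe m) := by
  have hswap : ∀ f : A × A → ℝ, ∑ p : A × A, f p.swap = ∑ p, f p := fun f =>
    Fintype.sum_equiv (Equiv.prodComm A A) _ _ fun _ => rfl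
  have hm' : IsPMF (m ∘ Prod.swap) := ⟨fun p => hm.1 _, by rw [← hm.2]; exact hswap m⟩
  have h := entropy_le_entropy_snd_add_fanoBound hm'
  rwa [show entropy (m ∘ Prod.swap) = entropy m from hswap (fun p => negMulLog (m p)),
    show probNe (m ∘ Prod.swap) = probNe m from
      (hswap _).symm.trans (sum_congr rfl fun p _ => if_congr ne_comm rfl rfl)] at h

end Fano

section Coupling

variable {X Y : Type*} [Fintype X] [Fintype Y]

structure IsCoupling (γ : X × Y → ℝ) (μ : X → ℝ) (ν : Y → ℝ) : Prop where
  nonneg : ∀ p, 0 ≤ γ p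
  fst_marginal : ∀ x, ∑ y, γ (x, y) = μ x
  snd_marginal : ∀ y, ∑ x, γ (x, y) = ν y

lemma isCoupling_mul {μ : X → ℝ} {ν : Y → ℝ} (hμ : IsPMF μ) (hν : IsPMF ν) :
    IsCoupling (fun p => μ p.1 * ν p.2) μ ν where
  nonneg p := mul_nonneg (hμ.1 _) (hν.1 _)
  fst_marginal x := by simp [← mul_sum, hν.2]
  snd_marginal y := by simp [← sum_mul, hμ.2]

lemma IsCoupling.isPMF {γ : X × Y → ℝ} {μ : X → ℝ} {ν : Y → ℝ} (hγ : IsCoupling γ μ ν)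
    (hμ : ∑ x, μ x = 1) : IsPMF γ :=
  ⟨hγ.nonneg, by simp only [Fintype.sum_prod_type, hγ.fst_marginal, hμ]⟩

end Coupling

lemma ftdist_mem_of_isClosed {K : Type*} [Fintype K] {d : K → K → ℝ} (hd : ∀ x y, 0 ≤ d x y)
    {μ ν : K → ℝ} (hμ : IsPMF μ) (hν : IsPMF ν) {s : Set ℝ} (hs : IsClosed s)
    (h : ∀ γ, IsCoupling γ μ ν → ∑ p, γ p * d p.1 p.2 ∈ s) : ftdist d μ ν ∈ s := by
  have hprod := isCoupling_mul hμ hν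
  refine hs.closure_subset_iff.2 ?_
    (csInf_mem_closure ⟨_, _, hprod.nonneg, hprod.fst_marginal, hprod.snd_marginal, rfl⟩ ?_)
  · rintro c ⟨γ, h0, h1, h2, rfl⟩
    exact h γ ⟨h0, h1, h2⟩
  · refine ⟨0, ?_⟩
    rintro c ⟨γ, h0, -, -, rfl⟩
    exact sum_nonneg fun p _ => mul_nonneg (h0 p) (hd _ _)

section PairMarginal

variable {A B : Type*} [Fintype A] [DecidableEq A] [Fintype B] [DecidableEq B] {n : ℕ}
  {γ : (Fin n → A) × (Fin n → B) → ℝ}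

noncomputable def pairMarginal (γ : (Fin n → A) × (Fin n → B) → ℝ) (i : Fin n) (q : A × B) : ℝ :=
  ∑ p : (Fin n → A) × (Fin n → B), if (p.1 i, p.2 i) = q then γ p else 0

lemma sum_pairMarginal_mul (γ : (Fin n → A) × (Fin n → B) → ℝ) (i : Fin n) (F : A × B → ℝ) :
    ∑ q, pairMarginal γ i q * F q = ∑ p, γ p * F (p.1 i, p.2 i) := by
  simp only [pairMarginal, sum_mul, ite_mul, zero_mul]
  rw [sum_comm]
  simp

lemma pairMarginal_nonneg (hγ : ∀ p, 0 ≤ γ p) (i : Fin n) (q : A × B) :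
    0 ≤ pairMarginal γ i q :=
  sum_nonneg fun p _ => by split_ifs <;> simp [hγ p]

lemma le_pairMarginal (hγ : ∀ p, 0 ≤ γ p) (i : Fin n) (p : (Fin n → A) × (Fin n → B)) :
    γ p ≤ pairMarginal γ i (p.1 i, p.2 i) := by
  simpa [pairMarginal] using single_le_sum (f := fun p' : (Fin n → A) × (Fin n → B) =>
    if (p'.1 i, p'.2 i) = (p.1 i, p.2 i) then γ p' else 0)
    (fun p' _ => by split_ifs <;> simp [hγ p']) (mem_univ p)

lemma IsPMF.pairMarginal (hγ : IsPMF γ) (i : Fin n) : IsPMF (pairMarginal γ i) :=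
  ⟨pairMarginal_nonneg hγ.1 i, by simpa [hγ.2] using sum_pairMarginal_mul γ i fun _ => 1⟩

lemma sum_pairMarginal_fst {μ : (Fin n → A) → ℝ} (hγ : ∀ x, ∑ y, γ (x, y) = μ x) (i : Fin n) :
    (fun a => ∑ b, pairMarginal γ i (a, b)) = marginal μ i := by
  funext a
  have h := sum_pairMarginal_mul γ i fun q => if q.1 = a then 1 else 0
  simp only [Fintype.sum_prod_type, mul_boole] at h
  change (∑ a', ∑ b, if a' = a then pairMarginal γ i (a', b) else 0)
    = ∑ x, ∑ y, (if x i = a then γ (x, y) else 0) at h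
  simp only [sum_ite_irrel, sum_const_zero, sum_ite_eq', mem_univ, if_true, hγ] at h
  rw [h, marginal]

lemma sum_pairMarginal_snd {w : (Fin n → B) → ℝ} (hγ : ∀ y, ∑ x, γ (x, y) = w y) (i : Fin n) :
    (fun b => ∑ a, pairMarginal γ i (a, b)) = marginal w i := by
  funext b
  have h := sum_pairMarginal_mul γ i fun q => if q.2 = b then 1 else 0
  simp only [Fintype.sum_prod_type_right, mul_boole] at h
  change (∑ b', ∑ a, if b' = b then pairMarginal γ i (a, b') else 0)
    = ∑ y, ∑ x, (if y i = b then γ (x, y) else 0) at h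
  simp only [sum_ite_irrel, sum_const_zero, sum_ite_eq', mem_univ, if_true, hγ] at h
  rw [h, marginal]

end PairMarginal

section CondSubadditivity

variable {A B : Type*} [Fintype A] [DecidableEq A] [Fintype B] [DecidableEq B] {n : ℕ}
  {γ : (Fin n → A) × (Fin n → B) → ℝ}

/-- The conditional probability `γ(Yᵢ = yᵢ | Xᵢ = xᵢ)` at `p = (x, y)`. -/
noncomputable def coordCond (γ : (Fin n → A) × (Fin n → B) → ℝ) (i : Fin n)
    (p : (Fin n → A) × (Fin n → B)) : ℝ :=
  pairMarginal γ i (p.1 i, p.2 i) / ∑ b, pairMarginal γ i (p.1 i, b)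

lemma coordCond_nonneg (hγ : ∀ p, 0 ≤ γ p) (i : Fin n) (p : (Fin n → A) × (Fin n → B)) :
    0 ≤ coordCond γ i p :=
  div_nonneg (pairMarginal_nonneg hγ i _) (sum_nonneg fun _ _ => pairMarginal_nonneg hγ i _)

lemma coordCond_pos (hγ : ∀ p, 0 ≤ γ p) (i : Fin n) {p : (Fin n → A) × (Fin n → B)}
    (hp : γ p ≠ 0) : 0 < coordCond γ i p := by
  have h := ((hγ p).lt_of_ne' hp).trans_le (le_pairMarginal hγ i p)
  exact div_pos h (h.trans_le (single_le_sum (f := fun b => pairMarginal γ i (p.1 i, b))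
    (fun _ _ => pairMarginal_nonneg hγ i _) (mem_univ _)))

lemma sum_prod_coordCond_le_one (hγ : ∀ p, 0 ≤ γ p) (x : Fin n → A) :
    ∑ y, ∏ i, coordCond γ i (x, y) ≤ 1 := by
  simp only [coordCond]
  rw [← Fintype.prod_sum fun i b => pairMarginal γ i (x i, b) / ∑ b', pairMarginal γ i (x i, b')]
  refine prod_le_one (fun i _ => ?_) fun i _ => ?_
  · exact sum_nonneg fun b _ =>
      div_nonneg (pairMarginal_nonneg hγ i _) (sum_nonneg fun _ _ => pairMarginal_nonneg hγ i _)
  · rw [← sum_div]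
    exact div_self_le_one _

lemma sum_mul_log_coordCond (hγ : ∀ p, 0 ≤ γ p) (i : Fin n) :
    ∑ p, γ p * log (coordCond γ i p)
      = -(entropy (pairMarginal γ i) - entropy (fun a => ∑ b, pairMarginal γ i (a, b))) := by
  rw [← sum_mul_log_div_fst (pairMarginal_nonneg hγ i), sum_pairMarginal_mul]
  rfl

/-- Subadditivity of conditional entropy: `H(Y | X) ≤ ∑ᵢ H(Yᵢ | Xᵢ)`. -/
theorem entropy_le_add_sum_pairMarginal {μ : (Fin n → A) → ℝ} (hμ : IsPMF μ)
    (hγ0 : ∀ p, 0 ≤ γ p) (hγ1 : ∀ x, ∑ y, γ (x, y) = μ x) :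
    entropy γ ≤ entropy μ + ∑ i, (entropy (pairMarginal γ i) - entropy (marginal μ i)) := by
  have hγ : IsPMF γ := ⟨hγ0, by simp only [Fintype.sum_prod_type, hγ1, hμ.2]⟩
  have hμpos : ∀ p, γ p ≠ 0 → 0 < μ p.1 := fun p hp => ((hγ0 p).lt_of_ne' hp).trans_le
    (hγ1 p.1 ▸ single_le_sum (f := fun y => γ (p.1, y)) (fun _ _ => hγ0 _) (mem_univ p.2))
  have hsum : ∑ p, μ p.1 * ∏ i, coordCond γ i p ≤ 1 := by
    rw [Fintype.sum_prod_type, ← hμ.2]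
    refine sum_le_sum fun x _ => ?_
    simp only [← mul_sum]
    exact mul_le_of_le_one_right (hμ.1 x) (sum_prod_coordCond_le_one hγ0 x)
  have hgibbs := entropy_le_neg_sum_mul_log hγ
    (fun p => mul_nonneg (hμ.1 _) (prod_nonneg fun i _ => coordCond_nonneg hγ0 i p)) hsum
    fun p hp => mul_pos (hμpos p hp) (prod_pos fun i _ => coordCond_pos hγ0 i hp)
  have hsplit : ∀ p, γ p * log (μ p.1 * ∏ i, coordCond γ i p)
      = γ p * log (μ p.1) + ∑ i, γ p * log (coordCond γ i p) := fun p => by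
    rcases eq_or_ne (γ p) 0 with hp | hp
    · simp [hp]
    rw [log_mul (hμpos p hp).ne' (prod_pos fun i _ => coordCond_pos hγ0 i hp).ne',
      log_prod fun i _ => (coordCond_pos hγ0 i hp).ne', mul_add, mul_sum]
  have hμterm : ∑ p, γ p * log (μ p.1) = -entropy μ := by
    simpa only [hγ1] using sum_mul_log_fst γ
  rw [sum_congr rfl fun p _ => hsplit p, sum_add_distrib, sum_comm, hμterm] at hgibbs
  simp only [sum_mul_log_coordCond hγ0, sum_pairMarginal_fst hγ1, sum_neg_distrib] at hgibbs
  linarith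

end CondSubadditivity

lemma ConcaveOn.sum_le_card_mul_map_sum_div {ι : Type*} [Fintype ι] {s : Set ℝ} {f : ℝ → ℝ}
    (hf : ConcaveOn ℝ s f) {d : ι → ℝ} (hd : ∀ i, d i ∈ s) :
    ∑ i, f (d i) ≤ Fintype.card ι * f ((∑ i, d i) / Fintype.card ι) := by
  rcases isEmpty_or_nonempty ι with hι | hι
  · simp
  have hcard : (0 : ℝ) < Fintype.card ι := by exact_mod_cast Fintype.card_pos
  have h := hf.le_map_sum (t := univ) (w := fun _ => (Fintype.card ι : ℝ)⁻¹)
    (fun _ _ => by positivity) (by simp [hcard.ne']) fun i _ => hd i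
  simp only [smul_eq_mul, ← mul_sum] at h
  rw [div_eq_inv_mul]
  calc ∑ i, f (d i) = Fintype.card ι * ((Fintype.card ι : ℝ)⁻¹ * ∑ i, f (d i)) := by
        field_simp
    _ ≤ _ := by gcongr

lemma hammingN_nonneg {A : Type*} [DecidableEq A] {n : ℕ} (x y : Fin n → A) :
    0 ≤ hammingN x y := by
  unfold hammingN
  positivity

section Hamming

variable {A : Type*} [Fintype A] [DecidableEq A] {n : ℕ}

lemma sum_mul_hammingN (γ : (Fin n → A) × (Fin n → A) → ℝ) :
    ∑ p, γ p * hammingN p.1 p.2 = (∑ i, probNe (pairMarginal γ i)) / n := by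
  have h : ∀ i, probNe (pairMarginal γ i) = ∑ p, if p.1 i ≠ p.2 i then γ p else 0 := by
    intro i
    have := sum_pairMarginal_mul γ i fun q => if q.1 ≠ q.2 then (1 : ℝ) else 0
    simp only [mul_boole] at this
    exact this
  simp only [h, hammingN, natCast_card_filter, mul_div_assoc', mul_sum, mul_boole, sum_div]
  exact sum_comm

lemma probNe_pairMarginal_mem_Icc {γ : (Fin n → A) × (Fin n → A) → ℝ} (hγ : IsPMF γ)
    (i : Fin n) : probNe (pairMarginal γ i) ∈ Set.Icc 0 1 :=
  ⟨probNe_nonneg (hγ.pairMarginal i).1, probNe_le_one (hγ.pairMarginal i)⟩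

end Hamming

section TotalCorrelation

variable {A : Type*} [Fintype A] [DecidableEq A] {n : ℕ} {ν : A → ℝ} {μ : (Fin n → A) → ℝ}
  {γ : (Fin n → A) × (Fin n → A) → ℝ}

theorem totalCorr_le_two_mul_sum_fanoBound (hν : IsPMF ν) (hμ : IsPMF μ)
    (hγ : IsCoupling γ μ fun y => ∏ i, ν (y i)) :
    totalCorr μ ≤ 2 * ∑ i, fanoBound A (probNe (pairMarginal γ i)) := by
  have hpmf := hγ.isPMF hμ.2
  have hfst := sum_pairMarginal_fst (γ := γ) hγ.fst_marginal
  have hsnd : ∀ i, (fun b => ∑ a, pairMarginal γ i (a, b)) = ν := fun i => by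
    rw [sum_pairMarginal_snd hγ.snd_marginal, marginal_pi hν]
  have hcoord : ∀ i, entropy (marginal μ i) ≤ entropy ν + fanoBound A (probNe (pairMarginal γ i)) :=
    fun i => hfst i ▸ (entropy_fst_le (pairMarginal_nonneg hpmf.1 i)).trans
      (hsnd i ▸ entropy_le_entropy_snd_add_fanoBound (hpmf.pairMarginal i))
  have hcond : ∀ i, entropy (pairMarginal γ i) - entropy (marginal μ i)
      ≤ fanoBound A (probNe (pairMarginal γ i)) := fun i => by
    have := hfst i ▸ entropy_le_entropy_fst_add_fanoBound (hpmf.pairMarginal i)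
    linarith
  have hY : n * entropy ν ≤ entropy γ := by
    have := entropy_snd_le hγ.nonneg
    rwa [funext hγ.snd_marginal, entropy_pi hν, Fintype.card_fin] at this
  have hXY := entropy_le_add_sum_pairMarginal hμ hγ.nonneg hγ.fst_marginal
  have h1 := sum_le_sum fun i (_ : i ∈ univ) => hcoord i
  have h2 := sum_le_sum fun i (_ : i ∈ univ) => hcond i
  simp only [sum_add_distrib, sum_const, card_univ, Fintype.card_fin, nsmul_eq_mul] at h1
  rw [totalCorr]
  linarith

theorem totalCorr_le_of_isCoupling (hν : IsPMF ν) (hμ : IsPMF μ)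
    (hγ : IsCoupling γ μ fun y => ∏ i, ν (y i)) :
    totalCorr μ ≤ 2 * fanoBound A (∑ p, γ p * hammingN p.1 p.2) * n := by
  have hjensen := (concaveOn_fanoBound A).sum_le_card_mul_map_sum_div
    (probNe_pairMarginal_mem_Icc (hγ.isPMF hμ.2))
  rw [Fintype.card_fin] at hjensen
  rw [sum_mul_hammingN]
  linarith [totalCorr_le_two_mul_sum_fanoBound hν hμ hγ]

end TotalCorrelation

/-- If `δ = d̄ₙ(μ, ν^{×n})` then `TC(μ) ≤ 2 (H(δ,1-δ) + δ log|A|) n`. -/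
theorem totalCorr_le_of_close_to_product {A : Type*} [Fintype A] [DecidableEq A] {n : ℕ}
    (ν : A → ℝ) (hν : IsPMF ν) (μ : (Fin n → A) → ℝ) (hμ : IsPMF μ) (δ : ℝ)
    (hδ : δ = ftdist hammingN μ (fun x => ∏ i, ν (x i))) :
    totalCorr μ ≤
      2 * (Real.negMulLog δ + Real.negMulLog (1 - δ) + δ * Real.log (Fintype.card A)) * n := by
  rw [← binEntropy_eq_negMulLog_add_negMulLog_one_sub, ← fanoBound, hδ]
  exact ftdist_mem_of_isClosed hammingN_nonneg hμ hν.pi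
    (s := {c | totalCorr μ ≤ 2 * fanoBound A c * n})
    (isClosed_le continuous_const (by unfold fanoBound; fun_prop))
    fun γ hγ => totalCorr_le_of_isCoupling hν hμ hγ
end
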